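/- Fix N and data φ_k ∈ ℝ^r, y_{k+1} = θᵀφ_k + w_{k+1} for k = 1,…,N, with Φ = Σφ_kφ_kᵀ positive definite having extreme eigenvalues λ_min, λ_max. Suppose ‖Φ^{-1/2} Σφ_k w_{k+1}‖ ≤ K√(log λ_max) for some K > 0, and each weight satisfies 0 < c_l ≤ c for l = 1,…,r. If β* minimizes J(β) = Σ(y_{k+1} − βᵀφ_k)² + λΣ_l c_l|β(l)| over ℝ^r with λ ≥ 0, then ‖β* − θ‖ ≤ 2K·(λ_max/λ_min)^{1/2}·√(log λ_max / λ_min) + c·√r·λ/λ_min. -/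

import Mathlib

/-
Write μ = β* − θ. Comparing the cost at the minimizer with the cost at θ gives the basic inequality
μᵀΦμ ≤ 2 μᵀ(Σ w_{k+1} φ_k) + λ Σ_l c_l |μ(l)|. The left side is at least λ_min ‖μ‖². Splitting the
cross term as (Φ^{1/2} μ)ᵀ(Φ^{-1/2} Σ w_{k+1} φ_k) bounds it by √λ_max ‖μ‖ · K √(log λ_max), and the
penalty is at most c √r ‖μ‖. Hence λ_min ‖μ‖² ≤ (2 √λ_max K √(log λ_max) + c √r λ) ‖μ‖.
-/

open Matrix

/-- Euclidean norm of a vector in ℝ^n. -/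
noncomputable def euclNorm {n : ℕ} (v : Fin n → ℝ) : ℝ := Real.sqrt (∑ i, v i ^ 2)

open scoped MatrixOrder

section EuclNorm

variable {n : ℕ}

lemma euclNorm_eq_sqrt_dotProduct (v : Fin n → ℝ) : euclNorm v = √(v ⬝ᵥ v) := by
  simp only [euclNorm, dotProduct, sq]

lemma euclNorm_nonneg (v : Fin n → ℝ) : 0 ≤ euclNorm v := Real.sqrt_nonneg _

lemma euclNorm_sq (v : Fin n → ℝ) : euclNorm v ^ 2 = v ⬝ᵥ v := by
  rw [euclNorm_eq_sqrt_dotProduct, Real.sq_sqrt (by simpa using dotProduct_self_star_nonneg v)]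

lemma dotProduct_le_euclNorm_mul_euclNorm (v w : Fin n → ℝ) :
    v ⬝ᵥ w ≤ euclNorm v * euclNorm w := by
  rw [euclNorm, euclNorm, ← Real.sqrt_mul (by positivity)]
  exact Real.le_sqrt_of_sq_le (Finset.sum_mul_sq_le_sq_mul_sq _ v w)

lemma sum_abs_le_sqrt_card_mul_euclNorm (v : Fin n → ℝ) :
    ∑ i, |v i| ≤ √n * euclNorm v := by
  have h := sq_sum_le_card_mul_sum_sq (s := Finset.univ) (f := fun i => |v i|)
  simp only [sq_abs, Finset.card_univ, Fintype.card_fin] at h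
  rw [euclNorm, ← Real.sqrt_mul n.cast_nonneg]
  exact Real.le_sqrt_of_sq_le h

end EuclNorm

lemma Real.sqrt_div_mul_sqrt_div (a b : ℝ) {c : ℝ} (hc : 0 ≤ c) :
    √(a / c) * √(b / c) = √a * √b / c := by
  rw [Real.sqrt_div' a hc, Real.sqrt_div' b hc, div_mul_div_comm, Real.mul_self_sqrt hc]

lemma le_div_of_mul_sq_le_mul {x a b : ℝ} (hx : 0 ≤ x) (ha : 0 < a) (hb : 0 ≤ b)
    (h : a * x ^ 2 ≤ b * x) : x ≤ b / a := by
  rw [le_div_iff₀ ha]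
  rcases hx.eq_or_lt with rfl | hx
  · simpa using hb
  · nlinarith

namespace Matrix

variable {ι n : Type*} [Fintype ι] [Fintype n]

lemma mulVec_dotProduct_mulVec (M N : Matrix n n ℝ) (x y : n → ℝ) :
    (M *ᵥ x) ⬝ᵥ (N *ᵥ y) = x ⬝ᵥ (Mᵀ * N) *ᵥ y := by
  rw [← vecMul_transpose, ← dotProduct_mulVec, mulVec_mulVec]

lemma dotProduct_sum_vecMulVec_mulVec (φ : ι → n → ℝ) (x : n → ℝ) :
    x ⬝ᵥ (∑ k, vecMulVec (φ k) (φ k)) *ᵥ x = ∑ k, (x ⬝ᵥ φ k) ^ 2 := by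
  simp only [sum_mulVec, vecMulVec_mulVec, dotProduct_sum]
  refine Finset.sum_congr rfl fun k _ => ?_
  simp [dotProduct_comm (φ k) x, sq]

variable [DecidableEq n]

lemma IsHermitian.mul_dotProduct_self_le_dotProduct_mulVec {A : Matrix n n ℝ}
    (hA : A.IsHermitian) {a : ℝ} (ha : ∀ i, a ≤ hA.eigenvalues i) (x : n → ℝ) :
    a * (x ⬝ᵥ x) ≤ x ⬝ᵥ A *ᵥ x := by
  have h : algebraMap ℝ _ a ≤ A := by
    rw [algebraMap_le_iff_le_spectrum hA, hA.spectrum_real_eq_range_eigenvalues]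
    rintro _ ⟨i, rfl⟩
    exact ha i
  simpa [sub_mulVec, Algebra.algebraMap_eq_smul_one, smul_mulVec] using
    (le_iff.mp h).dotProduct_mulVec_nonneg x

lemma IsHermitian.dotProduct_mulVec_le_mul_dotProduct_self {A : Matrix n n ℝ} (hA : A.IsHermitian)
    {b : ℝ} (hb : ∀ i, hA.eigenvalues i ≤ b) (x : n → ℝ) : x ⬝ᵥ A *ᵥ x ≤ b * (x ⬝ᵥ x) := by
  have h : A ≤ algebraMap ℝ _ b := by
    rw [le_algebraMap_iff_spectrum_le hA, hA.spectrum_real_eq_range_eigenvalues]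
    rintro _ ⟨i, rfl⟩
    exact hb i
  simpa [mulVec_sub, sub_mulVec, Algebra.algebraMap_eq_smul_one, smul_mulVec] using
    (le_iff.mp h).dotProduct_mulVec_nonneg x

lemma PosSemidef.eigenvectorUnitary_mul_diagonal_sqrt_mul_star_eq_sqrt {A : Matrix n n ℝ}
    (hA : A.PosSemidef) :
    (hA.1.eigenvectorUnitary : Matrix n n ℝ) * diagonal (Real.sqrt ∘ hA.1.eigenvalues) *
      (star hA.1.eigenvectorUnitary : Matrix n n ℝ) = CFC.sqrt A := by
  rw [CFC.sqrt_eq_cfc, cfc_nnreal_eq_real _ A, hA.1.cfc_eq, IsHermitian.cfc,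
    Unitary.conjStarAlgAut_apply]
  congr 3
  funext i
  rw [Function.comp_apply, Real.sqrt.eq_1]
  rfl

lemma PosDef.dotProduct_le_sqrt_mul_euclNorm {m : ℕ} {A : Matrix (Fin m) (Fin m) ℝ}
    (hA : A.PosDef) (x s : Fin m → ℝ) :
    x ⬝ᵥ s ≤ √(x ⬝ᵥ A *ᵥ x) * euclNorm ((CFC.sqrt A)⁻¹ *ᵥ s) := by
  set B := CFC.sqrt A
  have hBT : Bᵀ = B := by
    rw [← conjTranspose_eq_transpose_of_trivial]
    exact (CFC.sqrt_nonneg A).posSemidef.isHermitian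
  have hBB : B * B = A := CFC.sqrt_mul_sqrt_self A hA.posSemidef.nonneg
  have hBinv : B * B⁻¹ = 1 := mul_nonsing_inv B <| (isUnit_iff_isUnit_det B).mp <|
    (CFC.isUnit_sqrt_iff A hA.posSemidef.nonneg).mpr hA.isUnit
  calc x ⬝ᵥ s = (B *ᵥ x) ⬝ᵥ (B⁻¹ *ᵥ s) := by
        rw [mulVec_dotProduct_mulVec, hBT, hBinv, one_mulVec]
    _ ≤ euclNorm (B *ᵥ x) * euclNorm (B⁻¹ *ᵥ s) := dotProduct_le_euclNorm_mul_euclNorm _ _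
    _ = √(x ⬝ᵥ A *ᵥ x) * euclNorm (B⁻¹ *ᵥ s) := by
        rw [euclNorm_eq_sqrt_dotProduct (B *ᵥ x), mulVec_dotProduct_mulVec, hBT, hBB]

end Matrix

section WeightedLasso

variable {ι n : Type*} [Fintype ι] [Fintype n]

noncomputable def weightedLassoCost (φ : ι → n → ℝ) (y : ι → ℝ) (c : n → ℝ) (lam : ℝ)
    (β : n → ℝ) : ℝ :=
  ∑ k, (y k - β ⬝ᵥ φ k) ^ 2 + lam * ∑ l, c l * |β l|

lemma sum_mul_abs_sub_sum_mul_abs_le (c : n → ℝ) (hc : ∀ l, 0 ≤ c l) (a b : n → ℝ) :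
    ∑ l, c l * |a l| - ∑ l, c l * |b l| ≤ ∑ l, c l * |b l - a l| := by
  rw [← Finset.sum_sub_distrib]
  refine Finset.sum_le_sum fun l _ => ?_
  rw [← mul_sub]
  exact mul_le_mul_of_nonneg_left (abs_sub_comm (b l) (a l) ▸ abs_sub_abs_le_abs_sub _ _) (hc l)

lemma dotProduct_sum_vecMulVec_mulVec_le_of_weightedLassoCost_le {φ : ι → n → ℝ} {θ β : n → ℝ}
    {y w : ι → ℝ} (hy : ∀ k, y k = θ ⬝ᵥ φ k + w k) {c : n → ℝ} (hc : ∀ l, 0 ≤ c l) {lam : ℝ}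
    (hlam : 0 ≤ lam) (h : weightedLassoCost φ y c lam β ≤ weightedLassoCost φ y c lam θ) :
    (β - θ) ⬝ᵥ (∑ k, vecMulVec (φ k) (φ k)) *ᵥ (β - θ) ≤
      2 * ((β - θ) ⬝ᵥ ∑ k, w k • φ k) + lam * ∑ l, c l * |(β - θ) l| := by
  have hres : ∀ k, (y k - β ⬝ᵥ φ k) ^ 2 =
      (y k - θ ⬝ᵥ φ k) ^ 2 - 2 * ((β - θ) ⬝ᵥ w k • φ k) + ((β - θ) ⬝ᵥ φ k) ^ 2 := by
    intro k
    rw [hy k, dotProduct_smul, sub_dotProduct, smul_eq_mul]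
    ring
  have hpen := mul_le_mul_of_nonneg_left (sum_mul_abs_sub_sum_mul_abs_le c hc θ β) hlam
  rw [mul_sub] at hpen
  simp only [weightedLassoCost, hres, Finset.sum_add_distrib, Finset.sum_sub_distrib,
    ← Finset.mul_sum] at h
  rw [dotProduct_sum_vecMulVec_mulVec, dotProduct_sum]
  simp only [Pi.sub_apply]
  linarith

end WeightedLasso

theorem euclNorm_sub_le_of_weightedLassoCost_le {r N : ℕ} {φ : Fin N → Fin r → ℝ}
    {θ β : Fin r → ℝ} {y w : Fin N → ℝ} (hy : ∀ k, y k = θ ⬝ᵥ φ k + w k)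
    (hΦ : (∑ k, vecMulVec (φ k) (φ k)).PosDef) {lmin lmax : ℝ} (hlmin : 0 < lmin)
    (hlow : ∀ i, lmin ≤ hΦ.1.eigenvalues i) (hhigh : ∀ i, hΦ.1.eigenvalues i ≤ lmax)
    {κ : ℝ} (hκ : euclNorm ((CFC.sqrt (∑ k, vecMulVec (φ k) (φ k)))⁻¹ *ᵥ ∑ k, w k • φ k) ≤ κ)
    {c : Fin r → ℝ} {cb : ℝ} (hc : ∀ l, 0 ≤ c l) (hcb : ∀ l, c l ≤ cb) (hcb₀ : 0 ≤ cb)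
    {lam : ℝ} (hlam : 0 ≤ lam)
    (h : weightedLassoCost φ y c lam β ≤ weightedLassoCost φ y c lam θ) :
    euclNorm (β - θ) ≤ (2 * √lmax * κ + cb * √r * lam) / lmin := by
  set Φ := ∑ k, vecMulVec (φ k) (φ k)
  set μ := β - θ
  have hκ₀ : 0 ≤ κ := (euclNorm_nonneg _).trans hκ
  have hquad : lmin * euclNorm μ ^ 2 ≤ μ ⬝ᵥ Φ *ᵥ μ := by
    rw [euclNorm_sq]
    exact hΦ.1.mul_dotProduct_self_le_dotProduct_mulVec hlow μ
  have hcross : μ ⬝ᵥ ∑ k, w k • φ k ≤ √lmax * euclNorm μ * κ :=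
    calc μ ⬝ᵥ ∑ k, w k • φ k ≤ √(μ ⬝ᵥ Φ *ᵥ μ) * euclNorm ((CFC.sqrt Φ)⁻¹ *ᵥ ∑ k, w k • φ k) :=
          hΦ.dotProduct_le_sqrt_mul_euclNorm μ _
      _ ≤ √(lmax * (μ ⬝ᵥ μ)) * κ := by
          refine mul_le_mul (Real.sqrt_le_sqrt ?_) hκ (euclNorm_nonneg _) (Real.sqrt_nonneg _)
          exact hΦ.1.dotProduct_mulVec_le_mul_dotProduct_self hhigh μ
      _ = √lmax * euclNorm μ * κ := by
          rw [Real.sqrt_mul' _ (by simpa using dotProduct_self_star_nonneg μ),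
            euclNorm_eq_sqrt_dotProduct]
  have hpen : ∑ l, c l * |μ l| ≤ cb * (√r * euclNorm μ) :=
    calc ∑ l, c l * |μ l| ≤ ∑ l, cb * |μ l| :=
          Finset.sum_le_sum fun l _ => mul_le_mul_of_nonneg_right (hcb l) (abs_nonneg _)
      _ ≤ cb * (√r * euclNorm μ) := by
          rw [← Finset.mul_sum]
          exact mul_le_mul_of_nonneg_left (sum_abs_le_sqrt_card_mul_euclNorm μ) hcb₀
  have hbasic := dotProduct_sum_vecMulVec_mulVec_le_of_weightedLassoCost_le hy hc hlam h
  refine le_div_of_mul_sq_le_mul (euclNorm_nonneg μ) hlmin (by positivity) ?_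
  linear_combination hquad + hbasic + 2 * hcross + mul_le_mul_of_nonneg_left hpen hlam

theorem stmt14_general {r N : ℕ} (hr : 0 < r) (φ : Fin N → Fin r → ℝ) (θ : Fin r → ℝ)
    (y w : Fin N → ℝ) (hy : ∀ k, y k = θ ⬝ᵥ φ k + w k)
    (hΦ : (∑ k, vecMulVec (φ k) (φ k)).PosDef)
    (K : ℝ)
    (hKbound : euclNorm (((hΦ.1.eigenvectorUnitary : Matrix (Fin r) (Fin r) ℝ) * diagonal (Real.sqrt ∘ hΦ.1.eigenvalues) *
        (star hΦ.1.eigenvectorUnitary : Matrix (Fin r) (Fin r) ℝ))⁻¹.mulVec (∑ k, w k • φ k)) ≤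
      K * Real.sqrt (Real.log (⨆ i, hΦ.1.eigenvalues i)))
    (c : Fin r → ℝ) (cb : ℝ) (hc : ∀ l, 0 < c l ∧ c l ≤ cb)
    (lam : ℝ) (hlam : 0 ≤ lam) (βstar : Fin r → ℝ)
    (hmin : ∀ β : Fin r → ℝ,
      ∑ k, (y k - βstar ⬝ᵥ φ k) ^ 2 + lam * ∑ l, c l * |βstar l| ≤
        ∑ k, (y k - β ⬝ᵥ φ k) ^ 2 + lam * ∑ l, c l * |β l|) :
    euclNorm (βstar - θ) ≤
      2 * K * Real.sqrt ((⨆ i, hΦ.1.eigenvalues i) / (⨅ i, hΦ.1.eigenvalues i)) *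
          Real.sqrt (Real.log (⨆ i, hΦ.1.eigenvalues i) / (⨅ i, hΦ.1.eigenvalues i)) +
        cb * Real.sqrt r * lam / (⨅ i, hΦ.1.eigenvalues i) := by
  have : Nonempty (Fin r) := ⟨⟨0, hr⟩⟩
  have hlmin : 0 < ⨅ i, hΦ.1.eigenvalues i := by
    obtain ⟨i, hi⟩ := exists_eq_ciInf_of_finite (f := hΦ.1.eigenvalues)
    exact hi ▸ hΦ.eigenvalues_pos i
  rw [hΦ.posSemidef.eigenvectorUnitary_mul_diagonal_sqrt_mul_star_eq_sqrt] at hKbound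
  have hest := euclNorm_sub_le_of_weightedLassoCost_le hy hΦ hlmin
    (fun i => ciInf_le (Finite.bddBelow_range _) i) (fun i => le_ciSup (Finite.bddAbove_range _) i)
    hKbound (fun l => (hc l).1.le) (fun l => (hc l).2) ((hc ⟨0, hr⟩).1.le.trans (hc _).2) hlam
    (hmin θ)
  rw [mul_assoc (2 * K), Real.sqrt_div_mul_sqrt_div _ _ hlmin.le]
  convert hest using 1
  ring

theorem stmt14 {r N : ℕ} (hr : 0 < r) (φ : Fin N → Fin r → ℝ) (θ : Fin r → ℝ)
    (y w : Fin N → ℝ) (hy : ∀ k, y k = θ ⬝ᵥ φ k + w k)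
    (hΦ : (∑ k, vecMulVec (φ k) (φ k)).PosDef)
    (K : ℝ) (hK : 0 < K)
    (hKbound : euclNorm (((hΦ.1.eigenvectorUnitary : Matrix (Fin r) (Fin r) ℝ) * diagonal (Real.sqrt ∘ hΦ.1.eigenvalues) *
        (star hΦ.1.eigenvectorUnitary : Matrix (Fin r) (Fin r) ℝ))⁻¹.mulVec (∑ k, w k • φ k)) ≤
      K * Real.sqrt (Real.log (⨆ i, hΦ.1.eigenvalues i)))
    (c : Fin r → ℝ) (cb : ℝ) (hc : ∀ l, 0 < c l ∧ c l ≤ cb)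
    (lam : ℝ) (hlam : 0 ≤ lam) (βstar : Fin r → ℝ)
    (hmin : ∀ β : Fin r → ℝ,
      ∑ k, (y k - βstar ⬝ᵥ φ k) ^ 2 + lam * ∑ l, c l * |βstar l| ≤
        ∑ k, (y k - β ⬝ᵥ φ k) ^ 2 + lam * ∑ l, c l * |β l|) :
    euclNorm (βstar - θ) ≤
      2 * K * Real.sqrt ((⨆ i, hΦ.1.eigenvalues i) / (⨅ i, hΦ.1.eigenvalues i)) *
          Real.sqrt (Real.log (⨆ i, hΦ.1.eigenvalues i) / (⨅ i, hΦ.1.eigenvalues i)) +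
        cb * Real.sqrt r * lam / (⨅ i, hΦ.1.eigenvalues i) :=
  stmt14_general hr φ θ y w hy hΦ K hKbound c cb hc lam hlam βstar hmin
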